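/- arXiv:2204.11225 — 3 statements merged into one kernel-verified Lean document; each statement's English description precedes it below -/
import Mathlib

section
/- Let f : ℝⁿ → ℝⁿ be continuously differentiable, let y* be an equilibrium point of the autonomous system dy/dt = f(y) (i.e. f(y*) = 0), and suppose V : ℝⁿ → ℝ is continuously differentiable on a neighbourhood B of y* and satisfies: (a) V(y*) = 0 and V(y) > 0 for all y ∈ B with y ≠ y*, and (b) ∇V(y) · f(y) < 0 for all y ∈ B with y ≠ y*. Then y* is asymptotically stable: it is Lyapunov stable and there is a neighbourhood of y* such that every solution starting in it converges to y* as t → ∞. -/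
/-!
`V` is nonincreasing along every orbit that stays where `V` is defined. Because `V` is bounded
below by a positive constant on a small sphere around `y*` and is small near `y*`, an orbit
starting near `y*` can never reach that sphere: this is stability. For attraction, if `V` stayed
above some `m > 0` along an orbit, the orbit would remain in the compact set
`{x ∈ closedBall y* r | m ≤ V x}`, on which `∇V · f ≤ -κ < 0`; then `V` would decrease at
least linearly and become negative. So `V → 0` along the orbit, which forces the orbit to `y*`.
-/

open Metric Set Filter Topology

theorem exists_first_hitting_time {g : ℝ → ℝ} {a b r : ℝ} (hab : a ≤ b)
    (hg : ContinuousOn g (Icc a b)) (ha : g a < r) (hb : r ≤ g b) :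
    ∃ τ ∈ Ioc a b, g τ = r ∧ ∀ s ∈ Ico a τ, g s < r := by
  set S := Icc a b ∩ g ⁻¹' Ici r
  have hS : IsCompact S := isCompact_Icc.of_isClosed_subset
    (hg.preimage_isClosed_of_isClosed isClosed_Icc isClosed_Ici) inter_subset_left
  have hSbdd : BddBelow S := ⟨a, fun t ht => ht.1.1⟩
  obtain ⟨⟨haτ, hτb⟩, hτ⟩ : sInf S ∈ S := hS.sInf_mem ⟨b, ⟨hab, le_rfl⟩, hb⟩
  have hbefore : ∀ s ∈ Ico a (sInf S), g s < r := fun s hs =>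
    lt_of_not_ge fun hrs => (csInf_le hSbdd ⟨⟨hs.1, hs.2.le.trans hτb⟩, hrs⟩).not_gt hs.2
  have haτ' : a < sInf S := haτ.lt_of_ne fun h => (h ▸ ha).not_ge hτ
  refine ⟨sInf S, ⟨haτ', hτb⟩, le_antisymm ?_ hτ, hbefore⟩
  have hcont : ContinuousWithinAt g (Ico a (sInf S)) (sInf S) :=
    (hg _ ⟨haτ, hτb⟩).mono fun s hs => ⟨hs.1, hs.2.le.trans hτb⟩
  exact ContinuousWithinAt.closure_le (by simp [closure_Ico haτ'.ne, haτ]) hcont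
    continuousWithinAt_const fun s hs => (hbefore s hs).le

theorem tendsto_of_forall_eventually_lt {X α : Type*} [TopologicalSpace X] {V : X → ℝ} {x₀ : X}
    {K : Set X} {l : Filter α} {y : α → X} (hK : IsCompact K) (hV : ContinuousOn V K)
    (hpos : ∀ x ∈ K, x ≠ x₀ → 0 < V x) (hyK : ∀ᶠ a in l, y a ∈ K)
    (hVy : ∀ m > 0, ∀ᶠ a in l, V (y a) < m) : Tendsto y l (𝓝 x₀) := by
  refine (nhds_basis_opens x₀).tendsto_right_iff.2 fun U ⟨hx₀U, hU⟩ => ?_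
  obtain ⟨m, hm, hmV⟩ := (hK.diff hU).exists_forall_le' (hV.mono sdiff_subset)
    fun x hx => hpos x hx.1 fun h => hx.2 (h ▸ hx₀U)
  filter_upwards [hyK, hVy m hm] with a haK haV
  by_contra haU
  exact (hmV _ ⟨haK, haU⟩).not_gt haV

section Orbits

variable {E : Type*} [NormedAddCommGroup E] [NormedSpace ℝ E]

noncomputable def orbitalDeriv (V : E → ℝ) (f : E → E) (x : E) : ℝ :=
  fderiv ℝ V x (f x)

variable {f : E → E} {V : E → ℝ} {y : ℝ → E} {s : Set ℝ}

theorem hasDerivAt_comp_orbit {t : ℝ} (hV : DifferentiableAt ℝ V (y t))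
    (hy : HasDerivAt y (f (y t)) t) :
    HasDerivAt (fun s => V (y s)) (orbitalDeriv V f (y t)) t :=
  hV.hasFDerivAt.comp_hasDerivAt t hy

theorem antitoneOn_add_mul_of_orbitalDeriv_le {κ : ℝ} (hy : ∀ t, HasDerivAt y (f (y t)) t)
    (hs : Convex ℝ s) (hV : ∀ t ∈ s, DifferentiableAt ℝ V (y t))
    (hVy : ∀ t ∈ s, orbitalDeriv V f (y t) ≤ -κ) :
    AntitoneOn (fun t => V (y t) + κ * t) s := by
  have hderiv : ∀ t ∈ s,
      HasDerivAt (fun t => V (y t) + κ * t) (orbitalDeriv V f (y t) + κ) t := fun t ht =>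
    (hasDerivAt_comp_orbit (hV t ht) (hy t)).add (by simpa using (hasDerivAt_id t).const_mul κ)
  refine antitoneOn_of_hasDerivWithinAt_nonpos hs
    (fun t ht => (hderiv t ht).continuousAt.continuousWithinAt)
    (fun t ht => (hderiv t (interior_subset ht)).hasDerivWithinAt) fun t ht => ?_
  linarith [hVy t (interior_subset ht)]

theorem antitoneOn_of_orbitalDeriv_nonpos (hy : ∀ t, HasDerivAt y (f (y t)) t) (hs : Convex ℝ s)
    (hV : ∀ t ∈ s, DifferentiableAt ℝ V (y t)) (hVy : ∀ t ∈ s, orbitalDeriv V f (y t) ≤ 0) :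
    AntitoneOn (fun t => V (y t)) s := by
  simpa using antitoneOn_add_mul_of_orbitalDeriv_le (κ := 0) hy hs hV (by simpa using hVy)

structure IsStrictLyapunovOn (f : E → E) (V : E → ℝ) (x₀ : E) (O : Set E) : Prop where
  isOpen : IsOpen O
  mem : x₀ ∈ O
  differentiableOn : DifferentiableOn ℝ V O
  continuousOn_orbitalDeriv : ContinuousOn (orbitalDeriv V f) O
  apply_self : V x₀ = 0
  pos : ∀ x ∈ O, x ≠ x₀ → 0 < V x
  orbitalDeriv_neg : ∀ x ∈ O, x ≠ x₀ → orbitalDeriv V f x < 0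

namespace IsStrictLyapunovOn

variable {x₀ : E} {O : Set E}

theorem continuousOn (h : IsStrictLyapunovOn f V x₀ O) : ContinuousOn V O :=
  h.differentiableOn.continuousOn

theorem differentiableAt (h : IsStrictLyapunovOn f V x₀ O) {x : E} (hx : x ∈ O) :
    DifferentiableAt ℝ V x :=
  h.differentiableOn.differentiableAt (h.isOpen.mem_nhds hx)

theorem nonneg (h : IsStrictLyapunovOn f V x₀ O) {x : E} (hx : x ∈ O) : 0 ≤ V x := by
  rcases eq_or_ne x x₀ with rfl | hne
  · exact h.apply_self.ge
  · exact (h.pos x hx hne).le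

theorem isLocalMin (h : IsStrictLyapunovOn f V x₀ O) : IsLocalMin V x₀ := by
  filter_upwards [h.isOpen.mem_nhds h.mem] with x hx
  exact h.apply_self ▸ h.nonneg hx

theorem orbitalDeriv_nonpos (h : IsStrictLyapunovOn f V x₀ O) {x : E} (hx : x ∈ O) :
    orbitalDeriv V f x ≤ 0 := by
  rcases eq_or_ne x x₀ with rfl | hne
  · simp [orbitalDeriv, h.isLocalMin.fderiv_eq_zero]
  · exact (h.orbitalDeriv_neg x hx hne).le

theorem antitoneOn_of_mapsTo (h : IsStrictLyapunovOn f V x₀ O)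
    (hy : ∀ t, HasDerivAt y (f (y t)) t) (hs : Convex ℝ s) (hyO : MapsTo y s O) :
    AntitoneOn (fun t => V (y t)) s :=
  antitoneOn_of_orbitalDeriv_nonpos hy hs (fun _ ht => h.differentiableAt (hyO ht))
    fun _ ht => h.orbitalDeriv_nonpos (hyO ht)

theorem mapsTo_ball_of_lt (h : IsStrictLyapunovOn f V x₀ O) {r m : ℝ}
    (hrO : closedBall x₀ r ⊆ O) (hm : ∀ x ∈ sphere x₀ r, m ≤ V x)
    (hy : ∀ t, HasDerivAt y (f (y t)) t) (hy₀ : y 0 ∈ ball x₀ r) (hVy₀ : V (y 0) < m) :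
    MapsTo y (Ici 0) (ball x₀ r) := by
  intro t ht
  by_contra hyt
  have hcont : Continuous fun s => dist (y s) x₀ :=
    (continuous_iff_continuousAt.2 fun s => (hy s).continuousAt).dist continuous_const
  obtain ⟨τ, ⟨hτ₀, -⟩, hτr, hbefore⟩ := exists_first_hitting_time ht hcont.continuousOn
    (mem_ball.1 hy₀) (not_lt.1 hyt)
  have hclosedBall : MapsTo y (Icc 0 τ) (closedBall x₀ r) := fun s hs =>
    mem_closedBall.2 <| hs.2.eq_or_lt.elim (fun hsτ => (hsτ ▸ hτr).le)
      fun hsτ => (hbefore s ⟨hs.1, hsτ⟩).le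
  have hanti := h.antitoneOn_of_mapsTo hy (convex_Icc 0 τ) (hclosedBall.mono_right hrO)
  have hVτ : V (y τ) ≤ V (y 0) := hanti ⟨le_rfl, hτ₀.le⟩ ⟨hτ₀.le, le_rfl⟩ hτ₀.le
  linarith [hm _ (mem_sphere.2 hτr)]

variable [ProperSpace E]

theorem exists_nhds_forall_mem_ball (h : IsStrictLyapunovOn f V x₀ O) {r : ℝ} (hr : 0 < r)
    (hrO : closedBall x₀ r ⊆ O) :
    ∃ W ∈ 𝓝 x₀, ∀ y : ℝ → E, (∀ t, HasDerivAt y (f (y t)) t) → y 0 ∈ W →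
      MapsTo y (Ici 0) (ball x₀ r) := by
  obtain ⟨m, hm, hmV⟩ := (isCompact_sphere x₀ r).exists_forall_le'
    (h.continuousOn.mono (sphere_subset_closedBall.trans hrO)) fun x hx =>
      h.pos x (hrO (sphere_subset_closedBall hx)) (ne_of_mem_sphere hx hr.ne')
  have hVm : V ⁻¹' Iio m ∈ 𝓝 x₀ :=
    (h.continuousOn.continuousAt (h.isOpen.mem_nhds h.mem)).preimage_mem_nhds
      (Iio_mem_nhds (h.apply_self ▸ hm))
  exact ⟨ball x₀ r ∩ V ⁻¹' Iio m, inter_mem (ball_mem_nhds x₀ hr) hVm,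
    fun y hy hy₀ => h.mapsTo_ball_of_lt hrO hmV hy hy₀.1 hy₀.2⟩

theorem exists_lt_of_mapsTo_closedBall (h : IsStrictLyapunovOn f V x₀ O) {r : ℝ}
    (hrO : closedBall x₀ r ⊆ O) (hy : ∀ t, HasDerivAt y (f (y t)) t)
    (hball : MapsTo y (Ici 0) (closedBall x₀ r)) {m : ℝ} (hm : 0 < m) :
    ∃ t ≥ 0, V (y t) < m := by
  by_contra! hmV
  set K := closedBall x₀ r ∩ V ⁻¹' Ici m
  have hK : IsCompact K := (isCompact_closedBall x₀ r).of_isClosed_subset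
    ((h.continuousOn.mono hrO).preimage_isClosed_of_isClosed isClosed_closedBall isClosed_Ici)
    inter_subset_left
  obtain ⟨κ, hκ, hκD⟩ := hK.exists_forall_le'
    (h.continuousOn_orbitalDeriv.mono fun x hx => hrO hx.1).neg fun x hx =>
      neg_pos.2 <| h.orbitalDeriv_neg x (hrO hx.1) fun hx₀ =>
        (hx₀ ▸ h.apply_self ▸ hm).not_ge hx.2
  have hdecay := antitoneOn_add_mul_of_orbitalDeriv_le (κ := κ) hy (convex_Ici 0)
    (fun t ht => h.differentiableAt (hrO (hball ht)))
    fun t ht => le_neg.1 (hκD _ ⟨hball ht, hmV t ht⟩)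
  -- By time `V (y 0) / κ` the linear decay would have exhausted the whole of `V (y 0)`.
  have hT : 0 ≤ V (y 0) / κ := div_nonneg (h.nonneg (hrO (hball self_mem_Ici))) hκ.le
  have hVT := hdecay self_mem_Ici hT hT
  simp only [mul_zero, add_zero, mul_div_cancel₀ _ hκ.ne'] at hVT
  linarith [hmV _ hT]

theorem tendsto_of_mapsTo_closedBall (h : IsStrictLyapunovOn f V x₀ O) {r : ℝ}
    (hrO : closedBall x₀ r ⊆ O) (hy : ∀ t, HasDerivAt y (f (y t)) t)
    (hball : MapsTo y (Ici 0) (closedBall x₀ r)) : Tendsto y atTop (𝓝 x₀) := by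
  have hanti := h.antitoneOn_of_mapsTo hy (convex_Ici 0) (hball.mono_right hrO)
  refine tendsto_of_forall_eventually_lt (isCompact_closedBall x₀ r) (h.continuousOn.mono hrO)
    (fun x hx => h.pos x (hrO hx)) ((eventually_ge_atTop 0).mono fun _ ht => hball ht)
    fun m hm => ?_
  obtain ⟨t, ht, hVt⟩ := h.exists_lt_of_mapsTo_closedBall hrO hy hball hm
  filter_upwards [eventually_ge_atTop t] with s hs
  exact (hanti ht (ht.trans hs) hs).trans_lt hVt

end IsStrictLyapunovOn

end Orbits

theorem isStrictLyapunovOn_interior {F : Type*} [NormedAddCommGroup F] [InnerProductSpace ℝ F]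
    [CompleteSpace F] {f : F → F} {V : F → ℝ} {x₀ : F} {B : Set F} (hf : Continuous f)
    (hB : B ∈ 𝓝 x₀) (hV : ContDiffOn ℝ 1 V B) (hV₀ : V x₀ = 0)
    (hVpos : ∀ x ∈ B, x ≠ x₀ → 0 < V x)
    (hVf : ∀ x ∈ B, x ≠ x₀ → inner ℝ (gradient V x) (f x) < 0) :
    IsStrictLyapunovOn f V x₀ (interior B) where
  isOpen := isOpen_interior
  mem := mem_interior_iff_mem_nhds.2 hB
  differentiableOn := (hV.mono interior_subset).differentiableOn one_ne_zero
  continuousOn_orbitalDeriv :=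
    ((hV.mono interior_subset).continuousOn_fderiv_of_isOpen isOpen_interior le_rfl).clm_apply
      hf.continuousOn
  apply_self := hV₀
  pos x hx := hVpos x (interior_subset hx)
  orbitalDeriv_neg x hx hne := by
    simpa only [orbitalDeriv, inner_gradient_left] using hVf x (interior_subset hx) hne

theorem lyapunov_asymptotic_stability_general
    {n : ℕ} (f : EuclideanSpace ℝ (Fin n) → EuclideanSpace ℝ (Fin n))
    (hf : ContDiff ℝ 1 f)
    (ystar : EuclideanSpace ℝ (Fin n))
    (B : Set (EuclideanSpace ℝ (Fin n))) (hB : B ∈ nhds ystar)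
    (V : EuclideanSpace ℝ (Fin n) → ℝ) (hV : ContDiffOn ℝ 1 V B)
    (hV0 : V ystar = 0)
    (hVpos : ∀ y ∈ B, y ≠ ystar → 0 < V y)
    (hVdec : ∀ y ∈ B, y ≠ ystar → inner ℝ (gradient V y) (f y) < (0 : ℝ)) :
    (∀ U ∈ nhds ystar, ∃ W ∈ nhds ystar,
      ∀ y : ℝ → EuclideanSpace ℝ (Fin n),
        (∀ t, HasDerivAt y (f (y t)) t) → y 0 ∈ W → ∀ t ≥ (0 : ℝ), y t ∈ U) ∧
    (∃ N ∈ nhds ystar,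
      ∀ y : ℝ → EuclideanSpace ℝ (Fin n),
        (∀ t, HasDerivAt y (f (y t)) t) → y 0 ∈ N →
          Filter.Tendsto y Filter.atTop (nhds ystar)) := by
  have h := isStrictLyapunovOn_interior hf.continuous hB hV hV0 hVpos hVdec
  refine ⟨fun U hU => ?_, ?_⟩
  · obtain ⟨r, hr, hrOU⟩ := nhds_basis_closedBall.mem_iff.1 (inter_mem (h.isOpen.mem_nhds h.mem) hU)
    obtain ⟨W, hW, hWball⟩ := h.exists_nhds_forall_mem_ball hr fun x hx => (hrOU hx).1
    exact ⟨W, hW, fun y hy hy₀ t ht => (hrOU (ball_subset_closedBall (hWball y hy hy₀ ht))).2⟩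
  · obtain ⟨r, hr, hrO⟩ := nhds_basis_closedBall.mem_iff.1 (h.isOpen.mem_nhds h.mem)
    obtain ⟨W, hW, hWball⟩ := h.exists_nhds_forall_mem_ball hr hrO
    exact ⟨W, hW, fun y hy hy₀ => h.tendsto_of_mapsTo_closedBall hrO hy
      ((hWball y hy hy₀).mono_right ball_subset_closedBall)⟩

/-- **Lyapunov's theorem on asymptotic stability.**
If `f : ℝⁿ → ℝⁿ` is `C¹`, `y*` is an equilibrium (`f y* = 0`), and `V` is a `C¹`
strict Lyapunov function on a neighbourhood `B` of `y*` (positive away from `y*`,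
vanishing at `y*`, with `∇V · f < 0` away from `y*`), then `y*` is asymptotically
stable: it is Lyapunov stable and solutions starting near `y*` converge to `y*`. -/
theorem lyapunov_asymptotic_stability
    {n : ℕ} (f : EuclideanSpace ℝ (Fin n) → EuclideanSpace ℝ (Fin n))
    (hf : ContDiff ℝ 1 f)
    (ystar : EuclideanSpace ℝ (Fin n)) (hfix : f ystar = 0)
    (B : Set (EuclideanSpace ℝ (Fin n))) (hB : B ∈ nhds ystar)
    (V : EuclideanSpace ℝ (Fin n) → ℝ) (hV : ContDiffOn ℝ 1 V B)
    (hV0 : V ystar = 0)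
    (hVpos : ∀ y ∈ B, y ≠ ystar → 0 < V y)
    (hVdec : ∀ y ∈ B, y ≠ ystar → inner ℝ (gradient V y) (f y) < (0 : ℝ)) :
    (∀ U ∈ nhds ystar, ∃ W ∈ nhds ystar,
      ∀ y : ℝ → EuclideanSpace ℝ (Fin n),
        (∀ t, HasDerivAt y (f (y t)) t) → y 0 ∈ W → ∀ t ≥ (0 : ℝ), y t ∈ U) ∧
    (∃ N ∈ nhds ystar,
      ∀ y : ℝ → EuclideanSpace ℝ (Fin n),
        (∀ t, HasDerivAt y (f (y t)) t) → y 0 ∈ N →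
          Filter.Tendsto y Filter.atTop (nhds ystar)) :=
  lyapunov_asymptotic_stability_general f hf ystar B hB V hV hV0 hVpos hVdec
end

section
/- Let V : ℝⁿ → ℝ, let y, z ∈ ℝⁿ, let h > 0, let L̃ be an n×n real matrix whose symmetric part is negative definite (i.e. vᵀ L̃ v < 0 for every nonzero v ∈ ℝⁿ), and let g ∈ ℝⁿ satisfy the discrete gradient identity g · (z − y) = V(z) − V(y). If z and y satisfy the discrete gradient step z − y = h · L̃ g and z ≠ y, then V(z) < V(y). -/
open Matrix

theorem dotProduct_smul_mulVec_neg {ι : Type*} [Fintype ι] {L : Matrix ι ι ℝ}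
    (hL : ∀ v : ι → ℝ, v ≠ 0 → v ⬝ᵥ L *ᵥ v < 0) {h : ℝ} (hh : 0 < h) {g : ι → ℝ}
    (hstep : h • L *ᵥ g ≠ 0) :
    g ⬝ᵥ (h • L *ᵥ g) < 0 := by
  have hg : g ≠ 0 := by
    rintro rfl
    simp at hstep
  rw [dotProduct_smul, smul_eq_mul]
  exact mul_neg_of_pos_of_neg hh (hL g hg)

/-- **A discrete gradient step strictly decreases the Lyapunov function.**
If `L̃` has negative-definite symmetric part (`vᵀ L̃ v < 0` for `v ≠ 0`), `g` satisfies
the discrete gradient identity `g · (z - y) = V z - V y`, and the step is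
`z - y = h • L̃ g` with `h > 0` and `z ≠ y`, then `V z < V y`. -/
theorem discrete_gradient_step_decreases {n : ℕ}
    (V : (Fin n → ℝ) → ℝ) (y z : Fin n → ℝ) (h : ℝ) (hh : 0 < h)
    (L : Matrix (Fin n) (Fin n) ℝ)
    (hL : ∀ v : Fin n → ℝ, v ≠ 0 → v ⬝ᵥ L.mulVec v < 0)
    (g : Fin n → ℝ)
    (hg : g ⬝ᵥ (z - y) = V z - V y)
    (hstep : z - y = h • L.mulVec g)
    (hzy : z ≠ y) :
    V z < V y := by
  have hmove : h • L *ᵥ g ≠ 0 := hstep ▸ sub_ne_zero.mpr hzy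
  have hdecrease := dotProduct_smul_mulVec_neg hL hh hmove
  rw [← hstep, hg] at hdecrease
  linarith
end

section
/- Let a > 0, h > 0, y > 0, let V(y) = (1/2)(1 − y)², and let z = ((1 + a h − (a h/2) y) y) / (1 + (a h/2) y) be the step produced by the explicit discrete gradient method for the logistic equation. Then V(z) ≤ V(y), with strict inequality V(z) < V(y) whenever z ≠ y; indeed V(z) − V(y) = −a h y (1 − (z + y)/2)². -/
/-!
The step solves the implicit relation `z = y + h L(y) ∇̄V(y,z)` with `L(y) = -a y ≤ 0`, and for
the quadratic `V` the midpoint gradient `∇̄V(y,z) = -(1 - (z+y)/2)` is a discrete gradient: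
`V z - V y = ∇̄V(y,z) (z - y)`. Substituting the relation gives
`V z - V y = h L(y) ∇̄V(y,z)² ≤ 0`, and `∇̄V(y,z) = 0` would force `z = y`.
-/

def IsDiscreteGradient (V : ℝ → ℝ) (y z g : ℝ) : Prop :=
  V z - V y = g * (z - y)

namespace IsDiscreteGradient

variable {V : ℝ → ℝ} {y z g k : ℝ}

theorem sub_eq_of_step (hV : IsDiscreteGradient V y z g) (hstep : z - y = k * g) :
    V z - V y = k * g ^ 2 := by
  rw [hV, hstep]; ring

theorem le_of_step (hV : IsDiscreteGradient V y z g) (hstep : z - y = k * g) (hk : k ≤ 0) :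
    V z ≤ V y := by
  rw [← sub_nonpos, hV.sub_eq_of_step hstep]
  exact mul_nonpos_of_nonpos_of_nonneg hk (sq_nonneg g)

theorem lt_of_step (hV : IsDiscreteGradient V y z g) (hstep : z - y = k * g) (hk : k < 0)
    (hzy : z ≠ y) : V z < V y := by
  have hg : g ≠ 0 := by
    rintro rfl
    exact hzy (sub_eq_zero.mp (by rw [hstep, mul_zero]))
  rw [← sub_neg, hV.sub_eq_of_step hstep]
  exact mul_neg_of_neg_of_pos hk (sq_pos_of_ne_zero hg)

end IsDiscreteGradient

theorem isDiscreteGradient_half_one_sub_sq (y z : ℝ) :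
    IsDiscreteGradient (fun u => (1 / 2) * (1 - u) ^ 2) y z (-(1 - (z + y) / 2)) := by
  unfold IsDiscreteGradient; ring

theorem logistic_step_sub_eq {a h y : ℝ} (hd : 1 + (a * h / 2) * y ≠ 0) :
    let z := ((1 + a * h - (a * h / 2) * y) * y) / (1 + (a * h / 2) * y)
    z - y = h * (-(a * y)) * (-(1 - (z + y) / 2)) := by
  intro z
  have hz : z * (1 + (a * h / 2) * y) = (1 + a * h - (a * h / 2) * y) * y :=
    div_mul_cancel₀ _ hd
  linear_combination hz

/-- **The explicit discrete gradient step for the logistic equation decreases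
`V(y) = (1/2)(1-y)²`.**  With `z = ((1 + a h - (a h/2) y) y)/(1 + (a h/2) y)`:
`V(z) - V(y) = -a h y (1 - (z+y)/2)²`, hence `V(z) ≤ V(y)`, with strict
inequality whenever `z ≠ y`. -/
theorem logistic_discrete_gradient_decreases (a h y : ℝ)
    (ha : 0 < a) (hh : 0 < h) (hy : 0 < y) :
    let V : ℝ → ℝ := fun u => (1 / 2) * (1 - u) ^ 2
    let z : ℝ := ((1 + a * h - (a * h / 2) * y) * y) / (1 + (a * h / 2) * y)
    (V z - V y = -(a * h * y) * (1 - (z + y) / 2) ^ 2) ∧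
    (V z ≤ V y) ∧
    (z ≠ y → V z < V y) := by
  intro V z
  have hgrad : IsDiscreteGradient V y z (-(1 - (z + y) / 2)) :=
    isDiscreteGradient_half_one_sub_sq y z
  have hstep : z - y = h * (-(a * y)) * (-(1 - (z + y) / 2)) :=
    logistic_step_sub_eq (by positivity)
  have hk : h * (-(a * y)) < 0 := mul_neg_of_pos_of_neg hh (neg_neg_of_pos (mul_pos ha hy))
  refine ⟨?_, hgrad.le_of_step hstep hk.le, hgrad.lt_of_step hstep hk⟩
  rw [hgrad.sub_eq_of_step hstep]
  ring
end
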